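/- arXiv:2205.13068 — 6 statements merged into one kernel-verified Lean document; each statement's English description precedes it below -/
import Mathlib

section
/- For a balanced binary classification task with class-attribute matrix A whose rows are (α_1,...,α_n) and (β_1,...,β_n), the maximum over all balanced probability mass functions p on {0,1}^n × {1,2} satisfying the class-attribute constraints of the Bayes error Q(p) = 1 - Σ_{v∈{0,1}^n} max_j p(v,j) equals (1/2)(1 - max_{i∈[n]} |β_i - α_i|). -/
open Finset

open MeasureTheory

noncomputable section BayesAux

variable {n : ℕ} (α β : Fin n → ℝ)

def hfun (j : Fin 2) (t : ℝ) : Fin n → Bool := fun i =>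
  decide (t ≤ min (α i) (β i) ∨
    ((if j = (0 : Fin 2) then β i ≤ α i else α i ≤ β i) ∧ 1 - |β i - α i| < t))

def Sset (j : Fin 2) (v : Fin n → Bool) : Set ℝ :=
  {t | t ∈ Set.Ioc (0:ℝ) 1 ∧ hfun α β j t = v}

lemma measurable_coord (j : Fin 2) (i : Fin n) (b : Bool) :
    MeasurableSet {t : ℝ | hfun α β j t i = b} := by
  have : {t : ℝ | hfun α β j t i = true} =
      {t : ℝ | t ≤ min (α i) (β i)} ∪
      ({t : ℝ | (if j = (0 : Fin 2) then β i ≤ α i else α i ≤ β i)} ∩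
        {t : ℝ | 1 - |β i - α i| < t}) := by
    ext t
    simp [hfun, Set.mem_union, Set.mem_inter_iff, and_comm]
  have ht : MeasurableSet {t : ℝ | hfun α β j t i = true} := by
    rw [this]
    refine (measurableSet_le measurable_id measurable_const).union
      (MeasurableSet.inter ?_ (measurableSet_lt measurable_const measurable_id))
    by_cases hc : (if j = (0 : Fin 2) then β i ≤ α i else α i ≤ β i)
    · simp [hc]
    · simp [hc]
  cases b
  · have : {t : ℝ | hfun α β j t i = false} = {t : ℝ | hfun α β j t i = true}ᶜ := by
      ext t; simp
    rw [this]; exact ht.compl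
  · exact ht

lemma measurable_Sset (j : Fin 2) (v : Fin n → Bool) : MeasurableSet (Sset α β j v) := by
  have : Sset α β j v = Set.Ioc (0:ℝ) 1 ∩ ⋂ i, {t : ℝ | hfun α β j t i = v i} := by
    ext t
    simp only [Sset, Set.mem_setOf_eq, Set.mem_inter_iff, Set.mem_iInter, funext_iff]
  rw [this]
  exact measurableSet_Ioc.inter (MeasurableSet.iInter fun i => measurable_coord α β j i (v i))

lemma vol_Sset_ne_top (j : Fin 2) (v : Fin n → Bool) : volume (Sset α β j v) ≠ ⊤ := by
  refine ne_top_of_le_ne_top ?_ (measure_mono (fun t ht => ht.1 : Sset α β j v ⊆ Set.Ioc 0 1))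
  simp [Real.volume_Ioc]

lemma sum_Sset (j : Fin 2) (P : (Fin n → Bool) → Prop) [DecidablePred P] :
    ∑ v ∈ Finset.univ.filter P, volume (Sset α β j v)
      = volume {t : ℝ | t ∈ Set.Ioc (0:ℝ) 1 ∧ P (hfun α β j t)} := by
  classical
  have hU : {t : ℝ | t ∈ Set.Ioc (0:ℝ) 1 ∧ P (hfun α β j t)}
      = ⋃ v ∈ Finset.univ.filter P, Sset α β j v := by
    ext t
    simp only [Set.mem_setOf_eq, Set.mem_iUnion, Finset.mem_filter, Finset.mem_univ,
      true_and, Sset]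
    constructor
    · rintro ⟨ht, hP⟩; exact ⟨hfun α β j t, hP, ht, rfl⟩
    · rintro ⟨v, hP, ht, rfl⟩; exact ⟨ht, hP⟩
  rw [hU, measure_biUnion_finset ?_ (fun v _ => measurable_Sset α β j v)]
  intro v _ w _ hvw
  simp only [Function.onFun, Set.disjoint_left]
  rintro t ⟨_, h1⟩ ⟨_, h2⟩
  exact hvw (h1 ▸ h2 ▸ rfl)

lemma sum_Sset_toReal (j : Fin 2) (P : (Fin n → Bool) → Prop) [DecidablePred P] :
    ∑ v ∈ Finset.univ.filter P, (volume (Sset α β j v)).toReal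
      = (volume {t : ℝ | t ∈ Set.Ioc (0:ℝ) 1 ∧ P (hfun α β j t)}).toReal := by
  rw [← sum_Sset α β j P, ENNReal.toReal_sum (fun v _ => vol_Sset_ne_top α β j v)]

lemma vol_calc (m d : ℝ) (hm : 0 ≤ m) (hd : 0 ≤ d) (hmd : m + d ≤ 1) :
    volume {t : ℝ | t ∈ Set.Ioc (0:ℝ) 1 ∧ (t ≤ m ∨ 1 - d < t)}
      = ENNReal.ofReal (m + d) := by
  have hset : {t : ℝ | t ∈ Set.Ioc (0:ℝ) 1 ∧ (t ≤ m ∨ 1 - d < t)}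
      = Set.Ioc 0 m ∪ Set.Ioc (1 - d) 1 := by
    ext t
    simp only [Set.mem_setOf_eq, Set.mem_Ioc, Set.mem_union]
    constructor
    · rintro ⟨⟨h0, h1⟩, h2 | h2⟩
      · exact Or.inl ⟨h0, h2⟩
      · exact Or.inr ⟨h2, h1⟩
    · rintro (⟨h0, h1⟩ | ⟨h0, h1⟩)
      · exact ⟨⟨h0, by linarith⟩, Or.inl h1⟩
      · exact ⟨⟨by linarith, h1⟩, Or.inr h0⟩
  rw [hset, measure_union ?_ measurableSet_Ioc, Real.volume_Ioc, Real.volume_Ioc,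
    ← ENNReal.ofReal_add (by linarith) (by linarith)]
  · ring_nf
  · rw [Set.disjoint_left]
    rintro t ⟨_, h1⟩ ⟨h2, _⟩
    linarith

lemma vol_coord (hα : ∀ i, α i ∈ Set.Icc (0 : ℝ) 1) (hβ : ∀ i, β i ∈ Set.Icc (0 : ℝ) 1)
    (j : Fin 2) (i : Fin n) :
    volume {t : ℝ | t ∈ Set.Ioc (0:ℝ) 1 ∧ hfun α β j t i = true}
      = ENNReal.ofReal (if j = 0 then α i else β i) := by
  obtain ⟨ha0, ha1⟩ := hα i
  obtain ⟨hb0, hb1⟩ := hβ i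
  fin_cases j
  · show volume {t : ℝ | t ∈ Set.Ioc (0:ℝ) 1 ∧ hfun α β 0 t i = true}
      = ENNReal.ofReal (if (0 : Fin 2) = 0 then α i else β i)
    by_cases hc : β i ≤ α i
    · have habs : |β i - α i| = α i - β i := by rw [abs_of_nonpos (by linarith)]; ring
      have hmin : min (α i) (β i) = β i := min_eq_right hc
      have hset : {t : ℝ | t ∈ Set.Ioc (0:ℝ) 1 ∧ hfun α β 0 t i = true}
          = {t : ℝ | t ∈ Set.Ioc (0:ℝ) 1 ∧ (t ≤ β i ∨ 1 - (α i - β i) < t)} := by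
        ext t; simp [hfun, hc, habs, hmin]
      rw [hset, vol_calc _ _ hb0 (by linarith) (by linarith)]
      simp
    · have hmin : min (α i) (β i) = α i := min_eq_left (by linarith)
      have hset : {t : ℝ | t ∈ Set.Ioc (0:ℝ) 1 ∧ hfun α β 0 t i = true}
          = {t : ℝ | t ∈ Set.Ioc (0:ℝ) 1 ∧ (t ≤ α i ∨ 1 - 0 < t)} := by
        ext t
        simp only [hfun, Set.mem_setOf_eq, Set.mem_Ioc, decide_eq_true_eq, hc, hmin]
        constructor
        · rintro ⟨ht, h | h⟩
          · exact ⟨ht, Or.inl h⟩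
          · exact absurd h.1 (by simp [hc])
        · rintro ⟨ht, h | h⟩
          · exact ⟨ht, Or.inl h⟩
          · linarith [ht.2]
      rw [hset, vol_calc _ _ ha0 le_rfl (by linarith)]
      simp
  · show volume {t : ℝ | t ∈ Set.Ioc (0:ℝ) 1 ∧ hfun α β 1 t i = true}
      = ENNReal.ofReal (if (1 : Fin 2) = 0 then α i else β i)
    by_cases hc : α i ≤ β i
    · have habs : |β i - α i| = β i - α i := abs_of_nonneg (by linarith)
      have hmin : min (α i) (β i) = α i := min_eq_left hc
      have hset : {t : ℝ | t ∈ Set.Ioc (0:ℝ) 1 ∧ hfun α β 1 t i = true}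
          = {t : ℝ | t ∈ Set.Ioc (0:ℝ) 1 ∧ (t ≤ α i ∨ 1 - (β i - α i) < t)} := by
        ext t; simp [hfun, hc, habs, hmin]
      rw [hset, vol_calc _ _ ha0 (by linarith) (by linarith)]
      simp
    · have hmin : min (α i) (β i) = β i := min_eq_right (by linarith)
      have hset : {t : ℝ | t ∈ Set.Ioc (0:ℝ) 1 ∧ hfun α β 1 t i = true}
          = {t : ℝ | t ∈ Set.Ioc (0:ℝ) 1 ∧ (t ≤ β i ∨ 1 - 0 < t)} := by
        ext t
        simp only [hfun, Set.mem_setOf_eq, Set.mem_Ioc, decide_eq_true_eq, hc, hmin]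
        constructor
        · rintro ⟨ht, h | h⟩
          · exact ⟨ht, Or.inl h⟩
          · exact absurd h.1 (by simp [hc])
        · rintro ⟨ht, h | h⟩
          · exact ⟨ht, Or.inl h⟩
          · linarith [ht.2]
      rw [hset, vol_calc _ _ hb0 le_rfl (by linarith)]
      simp

lemma hfun_agree (M : ℝ) (hM : ∀ i, |β i - α i| ≤ M) (t : ℝ) (ht : t ≤ 1 - M) :
    hfun α β 0 t = hfun α β 1 t := by
  funext i
  have hB : ¬ (1 - |β i - α i| < t) := by
    have := hM i; push_neg; linarith
  simp [hfun, hB]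

lemma qval (p : (Fin n → Bool) → Fin 2 → ℝ)
    (h1 : ∀ j : Fin 2, ∑ v : Fin n → Bool, p v j = 1 / 2) :
    ∑ v : Fin n → Bool, max (p v 0) (p v 1)
      = 1 / 2 + (∑ v : Fin n → Bool, |p v 0 - p v 1|) / 2 := by
  have hmax : ∀ a b : ℝ, max a b = (a + b + |a - b|) / 2 := by
    intro a b
    rcases le_total a b with h | h
    · rw [max_eq_right h, abs_of_nonpos (by linarith)]; ring
    · rw [max_eq_left h, abs_of_nonneg (by linarith)]; ring
  calc ∑ v : Fin n → Bool, max (p v 0) (p v 1)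
      = ∑ v : Fin n → Bool, (p v 0 + p v 1 + |p v 0 - p v 1|) / 2 := by
        exact Finset.sum_congr rfl fun v _ => hmax _ _
    _ = ((∑ v : Fin n → Bool, p v 0) + (∑ v : Fin n → Bool, p v 1)
          + ∑ v : Fin n → Bool, |p v 0 - p v 1|) / 2 := by
        rw [← Finset.sum_div, ← Finset.sum_add_distrib, ← Finset.sum_add_distrib]
    _ = 1 / 2 + (∑ v : Fin n → Bool, |p v 0 - p v 1|) / 2 := by
        rw [h1 0, h1 1]; ring

lemma ub (i0 : Fin n) (p : (Fin n → Bool) → Fin 2 → ℝ)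
    (h1 : ∀ j : Fin 2, ∑ v : Fin n → Bool, p v j = 1 / 2)
    (h2 : ∀ (j : Fin 2) (i : Fin n),
      ∑ v ∈ Finset.univ.filter (fun v : Fin n → Bool => v i = true), p v j
        = (if j = 0 then α i else β i) * ∑ v : Fin n → Bool, p v j) :
    1 - ∑ v : Fin n → Bool, max (p v 0) (p v 1)
      ≤ 1 / 2 * (1 - |β i0 - α i0|) := by
  classical
  have hs1 : ∑ v ∈ Finset.univ.filter (fun v : Fin n → Bool => v i0 = true),
      (p v 0 - p v 1) = (α i0 - β i0) * (1 / 2) := by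
    rw [Finset.sum_sub_distrib, h2 0 i0, h2 1 i0, h1 0, h1 1]
    norm_num; ring
  have hs2 : ∑ v ∈ Finset.univ.filter (fun v : Fin n → Bool => ¬ (v i0 = true)),
      (p v 0 - p v 1) = -((α i0 - β i0) * (1 / 2)) := by
    have htot : ∑ v : Fin n → Bool, (p v 0 - p v 1) = 0 := by
      rw [Finset.sum_sub_distrib, h1 0, h1 1]; ring
    have hsplit := Finset.sum_filter_add_sum_filter_not Finset.univ
      (fun v : Fin n → Bool => v i0 = true) (fun v => p v 0 - p v 1)
    rw [htot] at hsplit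
    linarith [hs1, hsplit]
  have hkey : |β i0 - α i0| ≤ ∑ v : Fin n → Bool, |p v 0 - p v 1| := by
    have hsplit := Finset.sum_filter_add_sum_filter_not Finset.univ
      (fun v : Fin n → Bool => v i0 = true) (fun v => |p v 0 - p v 1|)
    have hb1 := Finset.abs_sum_le_sum_abs (fun v : Fin n → Bool => p v 0 - p v 1)
      (Finset.univ.filter (fun v : Fin n → Bool => v i0 = true))
    have hb2 := Finset.abs_sum_le_sum_abs (fun v : Fin n → Bool => p v 0 - p v 1)
      (Finset.univ.filter (fun v : Fin n → Bool => ¬ (v i0 = true)))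
    rw [hs1] at hb1
    rw [hs2] at hb2
    have h12 : |(1:ℝ) / 2| = 1 / 2 := abs_of_pos (by norm_num)
    have e1 : |(α i0 - β i0) * (1 / 2)| = |β i0 - α i0| / 2 := by
      rw [abs_mul, abs_sub_comm, h12]; ring
    have e2 : |-((α i0 - β i0) * (1 / 2))| = |β i0 - α i0| / 2 := by
      rw [abs_neg, abs_mul, abs_sub_comm, h12]; ring
    rw [e1] at hb1
    rw [e2] at hb2
    linarith [hsplit, hb1, hb2]
  have hq := qval p h1
  linarith

lemma diff_sum_le (M : ℝ) (hM0 : 0 ≤ M) (j j' : Fin 2)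
    (hagree : ∀ t : ℝ, t ≤ 1 - M → hfun α β j t = hfun α β j' t) :
    ∑ v : Fin n → Bool, (volume (Sset α β j v \ Sset α β j' v)).toReal ≤ M := by
  classical
  have hsub : ∀ v : Fin n → Bool, Sset α β j v \ Sset α β j' v ⊆ Set.Ioc (1 - M) 1 := by
    rintro v t ⟨⟨ht1, hv⟩, ht2⟩
    refine ⟨?_, ht1.2⟩
    by_contra h
    push_neg at h
    exact ht2 ⟨ht1, (hagree t h) ▸ hv⟩
  have hun : ∑ v : Fin n → Bool, volume (Sset α β j v \ Sset α β j' v)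
      ≤ ENNReal.ofReal M := by
    rw [← measure_biUnion_finset ?_
      (fun v _ => (measurable_Sset α β j v).diff (measurable_Sset α β j' v))]
    · refine le_trans (measure_mono (Set.iUnion₂_subset fun v _ => hsub v)) ?_
      rw [Real.volume_Ioc]
      exact le_of_eq (by ring_nf)
    · intro v _ w _ hvw
      simp only [Function.onFun, Set.disjoint_left]
      rintro t ⟨⟨_, h1⟩, _⟩ ⟨⟨_, h2⟩, _⟩
      exact hvw (h1 ▸ h2 ▸ rfl)
  have hfin : ∀ v : Fin n → Bool, volume (Sset α β j v \ Sset α β j' v) ≠ ⊤ :=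
    fun v => ne_top_of_le_ne_top (vol_Sset_ne_top α β j v) (measure_mono Set.diff_subset)
  rw [← ENNReal.toReal_ofReal hM0]
  rw [← ENNReal.toReal_sum (fun v _ => hfin v)]
  exact ENNReal.toReal_mono ENNReal.ofReal_ne_top hun

end BayesAux


/-- For a balanced binary classification task with class-attribute
matrix `A` whose rows are `α` and `β`, the maximum over all balanced PMFs `p`
on `{0,1}^n × {1,2}` satisfying the class-attribute constraints of the Bayes
error `Q(p) = 1 - ∑_v max_j p(v,j)` equals `(1/2)(1 - max_i |β_i - α_i|)`. -/
theorem stmt0 (n : ℕ) [NeZero n] (α β : Fin n → ℝ)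
    (hα : ∀ i, α i ∈ Set.Icc (0 : ℝ) 1) (hβ : ∀ i, β i ∈ Set.Icc (0 : ℝ) 1) :
    IsGreatest
      { x : ℝ | ∃ p : (Fin n → Bool) → Fin 2 → ℝ,
          (∀ v j, 0 ≤ p v j) ∧
          (∀ j : Fin 2, ∑ v : Fin n → Bool, p v j = 1 / 2) ∧
          (∀ (j : Fin 2) (i : Fin n),
            ∑ v ∈ Finset.univ.filter (fun v : Fin n → Bool => v i = true), p v j
              = (if j = 0 then α i else β i) * ∑ v : Fin n → Bool, p v j) ∧
          x = 1 - ∑ v : Fin n → Bool, max (p v 0) (p v 1) }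
      ((1 / 2) * (1 - Finset.univ.sup' Finset.univ_nonempty
          (fun i : Fin n => |β i - α i|))) := by
  classical
  obtain ⟨i0, -, hi0⟩ := Finset.exists_mem_eq_sup' (Finset.univ_nonempty)
    (fun i : Fin n => |β i - α i|)
  set M : ℝ := Finset.univ.sup' Finset.univ_nonempty (fun i : Fin n => |β i - α i|)
    with hMdef
  have hMle : ∀ i, |β i - α i| ≤ M := by
    intro i
    rw [hMdef]
    exact Finset.le_sup' (fun i : Fin n => |β i - α i|) (Finset.mem_univ i)
  have hM0 : 0 ≤ M := by rw [hi0]; exact abs_nonneg _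
  constructor
  · -- membership : the coupled construction attains the bound
    set p : (Fin n → Bool) → Fin 2 → ℝ :=
      fun v j => (volume (Sset α β j v)).toReal / 2 with hp
    have h0' : ∀ v j, 0 ≤ p v j := fun v j => by
      simp only [hp]; positivity
    have h1' : ∀ j : Fin 2, ∑ v : Fin n → Bool, p v j = 1 / 2 := by
      intro j
      have h := sum_Sset_toReal α β j (fun _ => True)
      rw [Finset.filter_true] at h
      simp only [hp, ← Finset.sum_div, h]
      have hset : {t : ℝ | t ∈ Set.Ioc (0:ℝ) 1 ∧ (fun _ : Fin n → Bool => True) (hfun α β j t)}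
          = Set.Ioc 0 1 := by ext t; simp
      rw [hset, Real.volume_Ioc]
      norm_num
    have h2' : ∀ (j : Fin 2) (i : Fin n),
        ∑ v ∈ Finset.univ.filter (fun v : Fin n → Bool => v i = true), p v j
          = (if j = 0 then α i else β i) * ∑ v : Fin n → Bool, p v j := by
      intro j i
      have hA0 : 0 ≤ (if j = 0 then α i else β i) := by
        split_ifs
        exacts [(hα i).1, (hβ i).1]
      have h := sum_Sset_toReal α β j (fun v : Fin n → Bool => v i = true)
      have hset : {t : ℝ | t ∈ Set.Ioc (0:ℝ) 1 ∧
            (fun v : Fin n → Bool => v i = true) (hfun α β j t)}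
          = {t : ℝ | t ∈ Set.Ioc (0:ℝ) 1 ∧ hfun α β j t i = true} := rfl
      rw [hset, vol_coord α β hα hβ j i] at h
      rw [h1' j]
      simp only [hp, ← Finset.sum_div, h, ENNReal.toReal_ofReal hA0]
      ring
    have hdiff : ∀ v : Fin n → Bool, |p v 0 - p v 1|
        ≤ ((volume (Sset α β 0 v \ Sset α β 1 v)).toReal
            + (volume (Sset α β 1 v \ Sset α β 0 v)).toReal) / 2 := by
      intro v
      have f01 : volume (Sset α β 0 v ∩ Sset α β 1 v) ≠ ⊤ :=
        ne_top_of_le_ne_top (vol_Sset_ne_top α β 0 v) (measure_mono Set.inter_subset_left)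
      have f0 : volume (Sset α β 0 v \ Sset α β 1 v) ≠ ⊤ :=
        ne_top_of_le_ne_top (vol_Sset_ne_top α β 0 v) (measure_mono Set.diff_subset)
      have f1 : volume (Sset α β 1 v \ Sset α β 0 v) ≠ ⊤ :=
        ne_top_of_le_ne_top (vol_Sset_ne_top α β 1 v) (measure_mono Set.diff_subset)
      have e0 : (volume (Sset α β 0 v)).toReal
          = (volume (Sset α β 0 v ∩ Sset α β 1 v)).toReal
            + (volume (Sset α β 0 v \ Sset α β 1 v)).toReal := by
        rw [← ENNReal.toReal_add f01 f0,
          measure_inter_add_diff _ (measurable_Sset α β 1 v)]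
      have e1 : (volume (Sset α β 1 v)).toReal
          = (volume (Sset α β 0 v ∩ Sset α β 1 v)).toReal
            + (volume (Sset α β 1 v \ Sset α β 0 v)).toReal := by
        rw [← ENNReal.toReal_add f01 f1, Set.inter_comm,
          measure_inter_add_diff _ (measurable_Sset α β 0 v)]
      have n0 : (0:ℝ) ≤ (volume (Sset α β 0 v \ Sset α β 1 v)).toReal :=
        ENNReal.toReal_nonneg
      have n1 : (0:ℝ) ≤ (volume (Sset α β 1 v \ Sset α β 0 v)).toReal :=
        ENNReal.toReal_nonneg
      simp only [hp]
      rw [abs_le]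
      constructor <;> [nlinarith [e0, e1]; nlinarith [e0, e1]]
    have hlbM : ∑ v : Fin n → Bool, |p v 0 - p v 1| ≤ M := by
      have hd0 := diff_sum_le α β M hM0 0 1
        (fun t ht => hfun_agree α β M hMle t ht)
      have hd1 := diff_sum_le α β M hM0 1 0
        (fun t ht => (hfun_agree α β M hMle t ht).symm)
      calc ∑ v : Fin n → Bool, |p v 0 - p v 1|
          ≤ ∑ v : Fin n → Bool,
            ((volume (Sset α β 0 v \ Sset α β 1 v)).toReal
              + (volume (Sset α β 1 v \ Sset α β 0 v)).toReal) / 2 :=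
            Finset.sum_le_sum (fun v _ => hdiff v)
        _ = ((∑ v : Fin n → Bool, (volume (Sset α β 0 v \ Sset α β 1 v)).toReal)
              + ∑ v : Fin n → Bool, (volume (Sset α β 1 v \ Sset α β 0 v)).toReal) / 2 := by
            rw [← Finset.sum_add_distrib, Finset.sum_div]
        _ ≤ M := by linarith
    have hub := ub α β i0 p h1' h2'
    have hq := qval p h1'
    rw [← hi0] at hub
    exact ⟨p, h0', h1', h2', by linarith⟩
  · rintro x ⟨p, h0, h1, h2, rfl⟩
    have h := ub α β i0 p h1 h2
    rw [hi0]
    exact h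
end

section
/- For a balanced binary classification task with class-attribute matrix A with rows (α_i) and (β_i), let i* = argmax_i |β_i - α_i|, and define the classifier g_a(v) = 1 + v_{i*} if α_{i*} < β_{i*} and g_a(v) = 1 + (1 - v_{i*}) otherwise. Then for every p ∈ P(A), the error ε(g_a, p) = 1 - Σ_v p(v, g_a(v)) equals exactly (1/2)(1 - max_i |β_i - α_i|). -/
open Finset

/-- the single-attribute classifier based on the attribute `istar`
with the largest gap `|β - α|` has error exactly `(1/2)(1 - |β_istar - α_istar|)`
with respect to every `p ∈ P(A)`. Classes 1,2 are encoded as `0,1 : Fin 2`. -/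
theorem stmt1 (n : ℕ) (α β : Fin n → ℝ)
    (hα : ∀ i, α i ∈ Set.Icc (0 : ℝ) 1) (hβ : ∀ i, β i ∈ Set.Icc (0 : ℝ) 1)
    (istar : Fin n) (hstar : ∀ i, |β i - α i| ≤ |β istar - α istar|)
    (p : (Fin n → Bool) → Fin 2 → ℝ)
    (hp0 : ∀ v j, 0 ≤ p v j)
    (hbal : ∀ j : Fin 2, ∑ v : Fin n → Bool, p v j = 1 / 2)
    (hCA : ∀ (j : Fin 2) (i : Fin n),
      ∑ v ∈ Finset.univ.filter (fun v : Fin n → Bool => v i = true), p v j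
        = (if j = 0 then α i else β i) * ∑ v : Fin n → Bool, p v j) :
    1 - ∑ v : Fin n → Bool,
        p v (if α istar < β istar then (if v istar then 1 else 0)
             else (if v istar then 0 else 1))
      = (1 / 2) * (1 - |β istar - α istar|) := by
  have h0 := hCA 0 istar
  have h1 := hCA 1 istar
  rw [hbal] at h0 h1
  norm_num at h0
  norm_num at h1
  -- complements
  have c0 : ∑ v ∈ Finset.univ.filter (fun v : Fin n → Bool => ¬ (v istar = true)), p v 0
      = 1/2 - α istar * (1/2) := by
    have := Finset.sum_filter_add_sum_filter_not Finset.univ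
      (fun v : Fin n → Bool => v istar = true) (fun v => p v 0)
    rw [h0, hbal 0] at this
    linarith
  have c1 : ∑ v ∈ Finset.univ.filter (fun v : Fin n → Bool => ¬ (v istar = true)), p v 1
      = 1/2 - β istar * (1/2) := by
    have := Finset.sum_filter_add_sum_filter_not Finset.univ
      (fun v : Fin n → Bool => v istar = true) (fun v => p v 1)
    rw [h1, hbal 1] at this
    linarith
  by_cases hlt : α istar < β istar
  · simp only [if_pos hlt]
    have hsum : ∑ v : Fin n → Bool, p v (if v istar then 1 else 0)
        = ∑ v ∈ Finset.univ.filter (fun v : Fin n → Bool => v istar = true), p v 1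
          + ∑ v ∈ Finset.univ.filter (fun v : Fin n → Bool => ¬ (v istar = true)), p v 0 := by
      rw [← Finset.sum_filter_add_sum_filter_not Finset.univ
        (fun v : Fin n → Bool => v istar = true)]
      congr 1
      · exact Finset.sum_congr rfl (fun v hv => by
          simp only [Finset.mem_filter] at hv; rw [if_pos hv.2])
      · exact Finset.sum_congr rfl (fun v hv => by
          simp only [Finset.mem_filter] at hv
          rw [if_neg (by simpa using hv.2)])
    rw [hsum, h1, c0, abs_of_pos (by linarith)]
    ring
  · simp only [if_neg hlt]
    push_neg at hlt
    have hsum : ∑ v : Fin n → Bool, p v (if v istar then 0 else 1)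
        = ∑ v ∈ Finset.univ.filter (fun v : Fin n → Bool => v istar = true), p v 0
          + ∑ v ∈ Finset.univ.filter (fun v : Fin n → Bool => ¬ (v istar = true)), p v 1 := by
      rw [← Finset.sum_filter_add_sum_filter_not Finset.univ
        (fun v : Fin n → Bool => v istar = true)]
      congr 1
      · exact Finset.sum_congr rfl (fun v hv => by
          simp only [Finset.mem_filter] at hv; rw [if_pos hv.2])
      · exact Finset.sum_congr rfl (fun v hv => by
          simp only [Finset.mem_filter] at hv
          rw [if_neg (by simpa using hv.2)])
    rw [hsum, h0, c1, abs_of_nonpos (by linarith)]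
    ring
end

section
/- Fix i ∈ [n] and let p be a maximizer over P(A_i) of the minimum error min_g ε^{(i)}(g,p) for a binary class-attribute matrix A_i (first i columns of A, with rows α and β, α_1 - β_1 ≥ α_a - β_a ≥ 0 for all a). Then min_g ε^{(i)}(g,p) = (1/2)(1 - (α_1 - β_1)) if and only if for each v ∈ {0,1}^{i-1}, p(1v,1) ≥ p(1v,2) and p(0v,1) ≤ p(0v,2). -/
open Finset

/-- with `i = m+1` attributes and binary classes (class 1 ↦ `0`,
class 2 ↦ `1`), let `p` be a maximizer over `P(A_i)` of the Bayes error
`Q(p) = min_g ε(g,p) = 1 - ∑_v max_j p(v,j)`.  Assuming attribute 1 (index `0`)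
has the largest nonnegative gap `α - β`, we have
`Q(p) = (1/2)(1 - (α_1 - β_1))` iff for every `v ∈ {0,1}^m`,
`p(1v,1) ≥ p(1v,2)` and `p(0v,1) ≤ p(0v,2)`, where `bv` prepends bit `b`. -/
theorem stmt6 (m : ℕ) (α β : Fin (m + 1) → ℝ)
    (hα : ∀ a, α a ∈ Set.Icc (0 : ℝ) 1) (hβ : ∀ a, β a ∈ Set.Icc (0 : ℝ) 1)
    (hgap : ∀ a, 0 ≤ α a - β a ∧ α a - β a ≤ α 0 - β 0)
    (p : (Fin (m + 1) → Bool) → Fin 2 → ℝ)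
    (hp0 : ∀ v j, 0 ≤ p v j)
    (hbal : ∀ j : Fin 2, ∑ v : Fin (m + 1) → Bool, p v j = 1 / 2)
    (hCA : ∀ (j : Fin 2) (i : Fin (m + 1)),
      ∑ v ∈ Finset.univ.filter (fun v : Fin (m + 1) → Bool => v i = true), p v j
        = (if j = 0 then α i else β i) * ∑ v : Fin (m + 1) → Bool, p v j)
    (hmax : ∀ p' : (Fin (m + 1) → Bool) → Fin 2 → ℝ,
      (∀ v j, 0 ≤ p' v j) →
      (∀ j : Fin 2, ∑ v : Fin (m + 1) → Bool, p' v j = 1 / 2) →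
      (∀ (j : Fin 2) (i : Fin (m + 1)),
        ∑ v ∈ Finset.univ.filter (fun v : Fin (m + 1) → Bool => v i = true), p' v j
          = (if j = 0 then α i else β i) * ∑ v : Fin (m + 1) → Bool, p' v j) →
      1 - ∑ v : Fin (m + 1) → Bool, max (p' v 0) (p' v 1)
        ≤ 1 - ∑ v : Fin (m + 1) → Bool, max (p v 0) (p v 1)) :
    (1 - ∑ v : Fin (m + 1) → Bool, max (p v 0) (p v 1)
        = (1 / 2) * (1 - (α 0 - β 0)))
      ↔ (∀ v : Fin m → Bool,
          p (Fin.cons true v) 1 ≤ p (Fin.cons true v) 0 ∧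
          p (Fin.cons false v) 0 ≤ p (Fin.cons false v) 1) := by
  classical
  set V := (Finset.univ : Finset (Fin (m + 1) → Bool))
  set d : (Fin (m + 1) → Bool) → ℝ := fun v => p v 0 - p v 1 with hd
  -- split sums
  have h0 := hCA 0 0
  have h1 := hCA 1 0
  rw [hbal 0, if_pos rfl] at h0
  rw [hbal 1, if_neg (by decide)] at h1
  have hsumT : ∑ v ∈ Finset.univ.filter (fun v : Fin (m + 1) → Bool => v 0 = true), d v
      = (α 0 - β 0) / 2 := by
    rw [Finset.sum_sub_distrib, h0, h1]; ring
  have htot : ∑ v : Fin (m + 1) → Bool, d v = 0 := by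
    rw [Finset.sum_sub_distrib, hbal 0, hbal 1]; ring
  have hsplit := Finset.sum_filter_add_sum_filter_not Finset.univ
      (fun v : Fin (m + 1) → Bool => v 0 = true) d
  have hsumF : ∑ v ∈ Finset.univ.filter (fun v : Fin (m + 1) → Bool => ¬ v 0 = true), d v
      = -((α 0 - β 0) / 2) := by
    rw [htot] at hsplit; rw [hsumT] at hsplit; linarith
  -- the sum of maxes
  have hS : ∑ v : Fin (m + 1) → Bool, max (p v 0) (p v 1)
      = 1 / 2 + (1 / 2) * ∑ v : Fin (m + 1) → Bool, |d v| := by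
    have hmx : ∀ v : Fin (m + 1) → Bool, max (p v 0) (p v 1)
        = (p v 0 + p v 1) / 2 + (1 / 2) * |d v| := by
      intro v
      rcases le_total (p v 0) (p v 1) with h | h
      · rw [max_eq_right h, hd, abs_of_nonpos (by dsimp; linarith)]; dsimp; ring
      · rw [max_eq_left h, hd, abs_of_nonneg (by dsimp; linarith)]; dsimp; ring
    rw [Finset.sum_congr rfl fun v _ => hmx v, Finset.sum_add_distrib, ← Finset.mul_sum]
    have e : ∑ x : Fin (m + 1) → Bool, (p x 0 + p x 1) / 2 = 1 / 2 := by
      rw [← Finset.sum_div, Finset.sum_add_distrib, hbal 0, hbal 1]; norm_num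
    rw [e]
  have habs_split := Finset.sum_filter_add_sum_filter_not Finset.univ
      (fun v : Fin (m + 1) → Bool => v 0 = true) (fun v => |d v|)
  constructor
  · intro hQ v
    have hD : ∑ v : Fin (m + 1) → Bool, |d v| = α 0 - β 0 := by
      rw [hS] at hQ; linarith
    -- each side's slack is zero
    have hslackT : ∑ v ∈ Finset.univ.filter (fun v : Fin (m + 1) → Bool => v 0 = true),
        (|d v| - d v) = 0 ∨ True := Or.inr trivial
    have hge : ∀ w ∈ Finset.univ.filter (fun v : Fin (m + 1) → Bool => v 0 = true),
        0 ≤ |d w| - d w := fun w _ => by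
      have := le_abs_self (d w); linarith
    have hge' : ∀ w ∈ Finset.univ.filter (fun v : Fin (m + 1) → Bool => ¬ w 0 = true),
        True := fun _ _ => trivial
    have hgeF : ∀ w ∈ Finset.univ.filter (fun v : Fin (m + 1) → Bool => ¬ v 0 = true),
        0 ≤ |d w| + d w := fun w _ => by
      have := neg_abs_le (d w); linarith
    have hsumslack : (∑ v ∈ Finset.univ.filter (fun v : Fin (m + 1) → Bool => v 0 = true),
          (|d v| - d v))
        + (∑ v ∈ Finset.univ.filter (fun v : Fin (m + 1) → Bool => ¬ v 0 = true),
          (|d v| + d v)) = 0 := by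
      rw [Finset.sum_sub_distrib, Finset.sum_add_distrib, hsumT, hsumF]
      rw [← hD, ← habs_split]; ring
    have hT0 : ∑ v ∈ Finset.univ.filter (fun v : Fin (m + 1) → Bool => v 0 = true),
        (|d v| - d v) = 0 := by
      have h1' := Finset.sum_nonneg hge
      have h2' := Finset.sum_nonneg hgeF
      linarith
    have hF0 : ∑ v ∈ Finset.univ.filter (fun v : Fin (m + 1) → Bool => ¬ v 0 = true),
        (|d v| + d v) = 0 := by
      have h1' := Finset.sum_nonneg hge
      linarith
    have hTz := (Finset.sum_eq_zero_iff_of_nonneg hge).mp hT0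
    have hFz := (Finset.sum_eq_zero_iff_of_nonneg hgeF).mp hF0
    constructor
    · have hmem : (Fin.cons true v : Fin (m + 1) → Bool) ∈
          Finset.univ.filter (fun v : Fin (m + 1) → Bool => v 0 = true) := by
        simp [Fin.cons_zero]
      have := hTz _ hmem
      have habs := le_abs_self (d (Fin.cons true v))
      have hdge : 0 ≤ d (Fin.cons true v) := by
        have h2 := abs_nonneg (d (Fin.cons true v)); linarith
      simpa [hd] using hdge
    · have hmem : (Fin.cons false v : Fin (m + 1) → Bool) ∈
          Finset.univ.filter (fun v : Fin (m + 1) → Bool => ¬ v 0 = true) := by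
        simp [Fin.cons_zero]
      have := hFz _ hmem
      have hdle : d (Fin.cons false v) ≤ 0 := by
        have h2 := abs_nonneg (d (Fin.cons false v)); linarith
      simpa [hd] using hdle
  · intro hsign
    have hdT : ∀ v : Fin (m + 1) → Bool, v 0 = true → 0 ≤ d v := by
      intro v hv
      have := (hsign (Fin.tail v)).1
      have hv' : (Fin.cons true (Fin.tail v) : Fin (m + 1) → Bool) = v := by
        rw [← hv]; exact Fin.cons_self_tail v
      rw [hv'] at this
      simp only [hd]; linarith
    have hdF : ∀ v : Fin (m + 1) → Bool, ¬ v 0 = true → d v ≤ 0 := by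
      intro v hv
      have hvf : v 0 = false := by simpa using hv
      have := (hsign (Fin.tail v)).2
      have hv' : (Fin.cons false (Fin.tail v) : Fin (m + 1) → Bool) = v := by
        rw [← hvf]; exact Fin.cons_self_tail v
      rw [hv'] at this
      simp only [hd]; linarith
    have hD : ∑ v : Fin (m + 1) → Bool, |d v| = α 0 - β 0 := by
      rw [← habs_split]
      have e1 : ∑ v ∈ Finset.univ.filter (fun v : Fin (m + 1) → Bool => v 0 = true),
          |d v| = (α 0 - β 0) / 2 := by
        rw [← hsumT]
        exact Finset.sum_congr rfl fun v hv =>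
          abs_of_nonneg (hdT v (by simpa using hv))
      have e2 : ∑ v ∈ Finset.univ.filter (fun v : Fin (m + 1) → Bool => ¬ v 0 = true),
          |d v| = (α 0 - β 0) / 2 := by
        have : ∑ v ∈ Finset.univ.filter (fun v : Fin (m + 1) → Bool => ¬ v 0 = true),
            |d v| = ∑ v ∈ Finset.univ.filter (fun v : Fin (m + 1) → Bool => ¬ v 0 = true),
            (- d v) := Finset.sum_congr rfl fun v hv =>
              abs_of_nonpos (hdF v (by simpa using hv))
        rw [this, Finset.sum_neg_distrib, hsumF]; ring
      rw [e1, e2]; ring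
    rw [hS, hD]; ring
end

section
/- Let G be the complete weighted graph on vertex set [k] with edge weights w_{j,j'} = (1/2)(1 - max_{i∈[n]} |A_{j,i} - A_{j',i}|). Then for any matching M of G, the worst-case Bayes error Q = max_{p ∈ P(A)} (1 - Σ_v max_j p(v,j)) satisfies Q ≥ (2/k) Σ_{e ∈ M} w_e. -/
open Finset

section helpers
variable {n : ℕ} [NeZero n]

noncomputable def mmax (x y : Fin n → ℝ) : ℝ :=
  univ.sup' univ_nonempty (fun i => |x i - y i|)

noncomputable def bb (x y : Fin n → ℝ) (i : Fin n) : ℝ :=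
  max 0 (max (x i) (y i) - mmax x y)

noncomputable def rr (x y : Fin n → ℝ) (i : Fin n) : ℝ := bb x y i / (1 - mmax x y)

noncomputable def ss (x y : Fin n → ℝ) (i : Fin n) : ℝ := (x i - bb x y i) / mmax x y

def Bf (p : ℝ) (b : Bool) : ℝ := if b then p else 1 - p

noncomputable def qq (x y : Fin n → ℝ) (v : Fin n → Bool) : ℝ :=
  (1 - mmax x y) * ∏ i, Bf (rr x y i) (v i) + mmax x y * ∏ i, Bf (ss x y i) (v i)

lemma abs_le_mmax (x y : Fin n → ℝ) (i : Fin n) : |x i - y i| ≤ mmax x y := by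
  unfold mmax; exact Finset.le_sup' (fun i => |x i - y i|) (mem_univ i)

lemma mmax_nonneg (x y : Fin n → ℝ) : 0 ≤ mmax x y :=
  le_trans (abs_nonneg _) (abs_le_mmax x y (Classical.arbitrary _))

lemma mmax_le_one (x y : Fin n → ℝ) (hx : ∀ i, x i ∈ Set.Icc (0:ℝ) 1)
    (hy : ∀ i, y i ∈ Set.Icc (0:ℝ) 1) : mmax x y ≤ 1 := by
  apply Finset.sup'_le
  intro i _
  have h1 := (hx i).1; have h2 := (hx i).2; have h3 := (hy i).1; have h4 := (hy i).2
  rw [abs_le]; constructor <;> linarith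

lemma mmax_comm (x y : Fin n → ℝ) : mmax x y = mmax y x := by
  unfold mmax; congr 1; funext i; rw [abs_sub_comm]

lemma bb_comm (x y : Fin n → ℝ) (i : Fin n) : bb x y i = bb y x i := by
  unfold bb; rw [mmax_comm, max_comm (x i)]

lemma rr_comm (x y : Fin n → ℝ) (i : Fin n) : rr x y i = rr y x i := by
  unfold rr; rw [mmax_comm, bb_comm]

lemma bb_nonneg (x y : Fin n → ℝ) (i : Fin n) : 0 ≤ bb x y i := le_max_left _ _

lemma bb_le_x (x y : Fin n → ℝ) (i : Fin n) (hx0 : 0 ≤ x i) : bb x y i ≤ x i := by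
  have h := abs_le_mmax x y i
  have : |x i - y i| = |y i - x i| := abs_sub_comm _ _
  have hy' : y i - x i ≤ mmax x y := le_trans (le_abs_self _) (by rw [← this]; exact h)
  have hm := mmax_nonneg x y
  apply max_le hx0
  rcases max_cases (x i) (y i) with ⟨he, _⟩ | ⟨he, _⟩ <;> rw [he] <;> linarith

lemma bb_le (x y : Fin n → ℝ) (i : Fin n) (hx : ∀ i, x i ∈ Set.Icc (0:ℝ) 1)
    (hy : ∀ i, y i ∈ Set.Icc (0:ℝ) 1) : bb x y i ≤ 1 - mmax x y := by
  have := mmax_le_one x y hx hy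
  have hx := (hx i).2; have hy := (hy i).2
  apply max_le (by linarith)
  rcases max_cases (x i) (y i) with ⟨he, _⟩ | ⟨he, _⟩ <;> rw [he] <;> linarith

lemma sub_bb_le (x y : Fin n → ℝ) (i : Fin n) (hx : x i ≤ 1) (hy : y i ≤ 1) :
    x i - bb x y i ≤ mmax x y := by
  rcases max_cases (0 : ℝ) (max (x i) (y i) - mmax x y) with ⟨he, hc⟩ | ⟨he, hc⟩
  · unfold bb; rw [he]
    have : x i ≤ max (x i) (y i) := le_max_left _ _
    linarith
  · unfold bb; rw [he]
    have : x i ≤ max (x i) (y i) := le_max_left _ _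
    linarith

lemma id_rr (x y : Fin n → ℝ) (i : Fin n) (hx : ∀ i, x i ∈ Set.Icc (0:ℝ) 1)
    (hy : ∀ i, y i ∈ Set.Icc (0:ℝ) 1) : (1 - mmax x y) * rr x y i = bb x y i := by
  rcases eq_or_lt_of_le (mmax_le_one x y hx hy) with h | h
  · have hb : bb x y i = 0 :=
      le_antisymm (by have := bb_le x y i hx hy; rw [← h] at this; linarith)
        (bb_nonneg x y i)
    rw [hb, ← h]; ring
  · have hne : (1 - mmax x y) ≠ 0 := by linarith
    rw [rr, mul_div_cancel₀ _ hne]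

lemma id_ss (x y : Fin n → ℝ) (i : Fin n) (hx0 : 0 ≤ x i) :
    mmax x y * ss x y i = x i - bb x y i := by
  rcases eq_or_lt_of_le (mmax_nonneg x y) with h | h
  · have habs := abs_le_mmax x y i
    rw [← h] at habs
    have hxy : x i = y i := by
      have h2 := abs_nonpos_iff.mp habs
      linarith [sub_eq_zero.mp h2]
    have hb : bb x y i = x i := by
      unfold bb; rw [← h, ← hxy, max_self, sub_zero, max_eq_right hx0]
    rw [hb, ← h]; ring
  · rw [ss, mul_div_cancel₀ _ (ne_of_gt h)]

lemma rr_mem (x y : Fin n → ℝ) (i : Fin n) (hx : ∀ i, x i ∈ Set.Icc (0:ℝ) 1)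
    (hy : ∀ i, y i ∈ Set.Icc (0:ℝ) 1) : rr x y i ∈ Set.Icc (0:ℝ) 1 := by
  constructor
  · exact div_nonneg (bb_nonneg x y i) (by linarith [mmax_le_one x y hx hy])
  · exact div_le_one_of_le₀ (bb_le x y i hx hy)
      (by linarith [mmax_le_one x y hx hy])

lemma ss_mem (x y : Fin n → ℝ) (i : Fin n) (hx : ∀ i, x i ∈ Set.Icc (0:ℝ) 1)
    (hy : ∀ i, y i ∈ Set.Icc (0:ℝ) 1) : ss x y i ∈ Set.Icc (0:ℝ) 1 := by
  constructor
  · exact div_nonneg (by linarith [bb_le_x x y i (hx i).1]) (mmax_nonneg x y)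
  · exact div_le_one_of_le₀ (sub_bb_le x y i (hx i).2 (hy i).2) (mmax_nonneg x y)

lemma Bf_nonneg {p : ℝ} (hp : p ∈ Set.Icc (0:ℝ) 1) (b : Bool) : 0 ≤ Bf p b := by
  cases b <;> simp [Bf] <;> [linarith [hp.2]; exact hp.1]

lemma Bf_sum (p : ℝ) : Bf p true + Bf p false = 1 := by simp [Bf]

lemma sum_prod_bool (f : Fin n → Bool → ℝ) :
    ∑ v : Fin n → Bool, ∏ i, f i (v i) = ∏ i, (f i true + f i false) := by
  have h := Finset.prod_univ_sum (fun _ : Fin n => (univ : Finset Bool)) f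
  rw [Fintype.piFinset_univ] at h
  rw [← h]
  congr 1; funext i
  simp [Fintype.sum_bool]

lemma sum_prod_Bf (c : Fin n → ℝ) :
    ∑ v : Fin n → Bool, ∏ i, Bf (c i) (v i) = 1 := by
  rw [sum_prod_bool]
  simp [Bf_sum]

lemma marg_prod_Bf (c : Fin n → ℝ) (i : Fin n) :
    ∑ v ∈ Finset.univ.filter (fun v : Fin n → Bool => v i = true),
      ∏ i', Bf (c i') (v i') = c i := by
  classical
  set g : Fin n → Bool → ℝ :=
    fun i' => if i' = i then (fun b => if b then c i else 0) else (fun b => Bf (c i') b)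
    with hg
  rw [Finset.sum_filter]
  have key : ∀ v : Fin n → Bool,
      (if v i = true then ∏ i', Bf (c i') (v i') else 0) = ∏ i', g i' (v i') := by
    intro v
    by_cases hv : v i = true
    · rw [if_pos hv]
      apply Finset.prod_congr rfl
      intro i' _
      by_cases hi' : i' = i
      · subst hi'; simp [g, hv, Bf]
      · simp [g, hi']
    · rw [if_neg hv]
      symm
      apply Finset.prod_eq_zero (mem_univ i)
      simp [g, hv]
  rw [Finset.sum_congr rfl (fun v _ => key v), sum_prod_bool]
  rw [Finset.prod_eq_single_of_mem i (mem_univ i)]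
  · simp [g]
  · intro b _ hb
    simp [g, hb, Bf_sum]

lemma qq_nonneg (x y : Fin n → ℝ) (v : Fin n → Bool) (hx : ∀ i, x i ∈ Set.Icc (0:ℝ) 1)
    (hy : ∀ i, y i ∈ Set.Icc (0:ℝ) 1) : 0 ≤ qq x y v := by
  apply add_nonneg
  · exact mul_nonneg (by linarith [mmax_le_one x y hx hy])
      (Finset.prod_nonneg fun i _ => Bf_nonneg (rr_mem x y i hx hy) _)
  · exact mul_nonneg (mmax_nonneg x y)
      (Finset.prod_nonneg fun i _ => Bf_nonneg (ss_mem x y i hx hy) _)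

lemma qq_sum (x y : Fin n → ℝ) : ∑ v : Fin n → Bool, qq x y v = 1 := by
  unfold qq
  rw [Finset.sum_add_distrib, ← Finset.mul_sum, ← Finset.mul_sum,
    sum_prod_Bf, sum_prod_Bf]
  ring

lemma qq_marg (x y : Fin n → ℝ) (i : Fin n) (hx : ∀ i, x i ∈ Set.Icc (0:ℝ) 1)
    (hy : ∀ i, y i ∈ Set.Icc (0:ℝ) 1) :
    ∑ v ∈ Finset.univ.filter (fun v : Fin n → Bool => v i = true), qq x y v = x i := by
  unfold qq
  rw [Finset.sum_add_distrib, ← Finset.mul_sum, ← Finset.mul_sum,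
    marg_prod_Bf, marg_prod_Bf, id_rr x y i hx hy, id_ss x y i (hx i).1]
  ring

lemma qq_lb (x y : Fin n → ℝ) (v : Fin n → Bool) (hx : ∀ i, x i ∈ Set.Icc (0:ℝ) 1)
    (hy : ∀ i, y i ∈ Set.Icc (0:ℝ) 1) :
    (1 - mmax x y) * ∏ i, Bf (rr x y i) (v i) ≤ qq x y v := by
  unfold qq
  have : 0 ≤ mmax x y * ∏ i, Bf (ss x y i) (v i) :=
    mul_nonneg (mmax_nonneg x y)
      (Finset.prod_nonneg fun i _ => Bf_nonneg (ss_mem x y i hx hy) _)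
  linarith

lemma qq_max_sum (x y : Fin n → ℝ) (hx : ∀ i, x i ∈ Set.Icc (0:ℝ) 1)
    (hy : ∀ i, y i ∈ Set.Icc (0:ℝ) 1) :
    ∑ v : Fin n → Bool, max (qq x y v) (qq y x v) ≤ 1 + mmax x y := by
  have key : ∀ v : Fin n → Bool, max (qq x y v) (qq y x v)
      ≤ qq x y v + qq y x v - (1 - mmax x y) * ∏ i, Bf (rr x y i) (v i) := by
    intro v
    have h1 := qq_lb x y v hx hy
    have h2 := qq_lb y x v hy hx
    simp only [rr_comm y x, mmax_comm y x] at h2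
    exact max_le (by linarith) (by linarith)
  calc ∑ v : Fin n → Bool, max (qq x y v) (qq y x v)
      ≤ ∑ v : Fin n → Bool, (qq x y v + qq y x v
          - (1 - mmax x y) * ∏ i, Bf (rr x y i) (v i)) :=
        Finset.sum_le_sum fun v _ => key v
    _ = 1 + mmax x y := by
        rw [Finset.sum_sub_distrib, Finset.sum_add_distrib, qq_sum, qq_sum,
          ← Finset.mul_sum, sum_prod_Bf]
        ring

end helpers

set_option maxHeartbeats 1000000 in
/-- for any matching `M` of the complete graph on the `k` classes
with edge weights `w_{j,j'} = (1/2)(1 - max_i |A_{j,i} - A_{j',i}|)`, the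
worst-case Bayes error `Q` satisfies `Q ≥ (2/k) ∑_{e ∈ M} w_e`.  Edges are
represented as ordered pairs with distinct components, pairwise disjoint. -/
theorem stmt7 (n k : ℕ) [NeZero n] [NeZero k] (A : Fin k → Fin n → ℝ)
    (hA : ∀ j i, A j i ∈ Set.Icc (0 : ℝ) 1)
    (M : Finset (Fin k × Fin k))
    (hM1 : ∀ e ∈ M, e.1 ≠ e.2)
    (hM2 : ∀ e ∈ M, ∀ e' ∈ M, e ≠ e' →
      e.1 ≠ e'.1 ∧ e.1 ≠ e'.2 ∧ e.2 ≠ e'.1 ∧ e.2 ≠ e'.2)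
    (Q : ℝ)
    (hQ : IsGreatest { x : ℝ | ∃ p : (Fin n → Bool) → Fin k → ℝ,
        (∀ v j, 0 ≤ p v j) ∧
        (∀ j, ∑ v : Fin n → Bool, p v j = 1 / (k : ℝ)) ∧
        (∀ (j : Fin k) (i : Fin n),
          ∑ v ∈ Finset.univ.filter (fun v : Fin n → Bool => v i = true), p v j
            = A j i * ∑ v : Fin n → Bool, p v j) ∧
        x = 1 - ∑ v : Fin n → Bool,
          (Finset.univ.sup' Finset.univ_nonempty (fun j : Fin k => p v j)) } Q) :
    (2 / (k : ℝ)) * ∑ e ∈ M,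
        (1 / 2) * (1 - Finset.univ.sup' Finset.univ_nonempty
          (fun i : Fin n => |A e.1 i - A e.2 i|)) ≤ Q := by
  classical
  have hk : (0:ℝ) < (k:ℝ) := by exact_mod_cast Nat.pos_of_ne_zero (NeZero.ne k)
  -- uniqueness of the edge containing a vertex
  have huniq : ∀ e ∈ M, ∀ e' ∈ M, ∀ j : Fin k,
      (j = e.1 ∨ j = e.2) → (j = e'.1 ∨ j = e'.2) → e = e' := by
    intro e he e' he' j h1 h2
    by_contra hne
    obtain ⟨a, b, c, d⟩ := hM2 e he e' he' hne
    rcases h1 with h1 | h1 <;> rcases h2 with h2 | h2 <;> subst h1 <;> simp_all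
  -- partner function
  set pt : Fin k → Fin k := fun j =>
    if h : ∃ e ∈ M, j = e.1 ∨ j = e.2 then
      (if j = h.choose.1 then h.choose.2 else h.choose.1) else j with hptdef
  have hpt1 : ∀ e ∈ M, pt e.1 = e.2 := by
    intro e he
    have hex : ∃ e' ∈ M, e.1 = e'.1 ∨ e.1 = e'.2 := ⟨e, he, Or.inl rfl⟩
    obtain ⟨he', hor⟩ := hex.choose_spec
    have heq : hex.choose = e := (huniq e he hex.choose he' e.1 (Or.inl rfl) hor).symm
    simp only [hptdef]
    rw [dif_pos hex, heq, if_pos rfl]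
  have hpt2 : ∀ e ∈ M, pt e.2 = e.1 := by
    intro e he
    have hex : ∃ e' ∈ M, e.2 = e'.1 ∨ e.2 = e'.2 := ⟨e, he, Or.inr rfl⟩
    obtain ⟨he', hor⟩ := hex.choose_spec
    have heq : hex.choose = e := (huniq e he hex.choose he' e.2 (Or.inr rfl) hor).symm
    simp only [hptdef]
    rw [dif_pos hex, heq, if_neg (Ne.symm (hM1 e he))]
  -- the distribution
  set p : (Fin n → Bool) → Fin k → ℝ :=
    fun v j => (1/(k:ℝ)) * qq (A j) (A (pt j)) v with hpdef
  have hnn : ∀ v j, 0 ≤ p v j := fun v j =>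
    mul_nonneg (by positivity) (qq_nonneg _ _ _ (hA j) (hA (pt j)))
  have hsum : ∀ j, ∑ v : Fin n → Bool, p v j = 1 / (k:ℝ) := by
    intro j
    simp only [hpdef]
    rw [← Finset.mul_sum, qq_sum, mul_one]
  have hmarg : ∀ (j : Fin k) (i : Fin n),
      ∑ v ∈ Finset.univ.filter (fun v : Fin n → Bool => v i = true), p v j
        = A j i * ∑ v : Fin n → Bool, p v j := by
    intro j i
    rw [hsum j]
    simp only [hpdef]
    rw [← Finset.mul_sum, qq_marg _ _ _ (hA j) (hA (pt j))]
    ring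
  -- membership in the feasible set
  have hxS : (1 - ∑ v : Fin n → Bool,
      (Finset.univ.sup' Finset.univ_nonempty (fun j : Fin k => p v j)))
      ∈ { x : ℝ | ∃ p : (Fin n → Bool) → Fin k → ℝ,
        (∀ v j, 0 ≤ p v j) ∧
        (∀ j, ∑ v : Fin n → Bool, p v j = 1 / (k : ℝ)) ∧
        (∀ (j : Fin k) (i : Fin n),
          ∑ v ∈ Finset.univ.filter (fun v : Fin n → Bool => v i = true), p v j
            = A j i * ∑ v : Fin n → Bool, p v j) ∧
        x = 1 - ∑ v : Fin n → Bool,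
          (Finset.univ.sup' Finset.univ_nonempty (fun j : Fin k => p v j)) } :=
    ⟨p, hnn, hsum, hmarg, rfl⟩
  have hxQ := hQ.2 hxS
  -- cover of the matching
  set C : Finset (Fin k) := M.biUnion (fun e => {e.1, e.2}) with hCdef
  have hCcard : C.card = 2 * M.card := by
    rw [hCdef, Finset.card_biUnion]
    · rw [Finset.sum_congr rfl (fun e he => ?_), Finset.sum_const, smul_eq_mul, mul_comm]
      rw [Finset.card_insert_of_notMem (by simp [hM1 e he]), Finset.card_singleton]
    · intro e he e' he' hne
      obtain ⟨a, b, c, d⟩ := hM2 e he e' he' hne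
      simp only [Finset.disjoint_insert_left, Finset.disjoint_singleton_left,
        Finset.mem_insert, Finset.mem_singleton]
      push_neg
      exact ⟨⟨a, b⟩, c, d⟩
  have hC2k : 2 * M.card ≤ k := by
    have := Finset.card_le_card (Finset.subset_univ C)
    rwa [hCcard, Finset.card_univ, Fintype.card_fin] at this
  -- pointwise bound on the sup
  have hsup : ∀ v : Fin n → Bool,
      Finset.univ.sup' Finset.univ_nonempty (fun j : Fin k => p v j)
      ≤ (∑ e ∈ M, max (p v e.1) (p v e.2)) + ∑ j ∈ Finset.univ \ C, p v j := by
    intro v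
    apply Finset.sup'_le
    intro j _
    have hM0 : (0:ℝ) ≤ ∑ e ∈ M, max (p v e.1) (p v e.2) :=
      Finset.sum_nonneg fun e _ => le_trans (hnn v e.1) (le_max_left _ _)
    have hU0 : (0:ℝ) ≤ ∑ j ∈ Finset.univ \ C, p v j :=
      Finset.sum_nonneg fun j _ => hnn v j
    by_cases hj : j ∈ C
    · rw [hCdef] at hj
      simp only [Finset.mem_biUnion, Finset.mem_insert, Finset.mem_singleton] at hj
      obtain ⟨e, he, hor⟩ := hj
      have h1 : p v j ≤ max (p v e.1) (p v e.2) := by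
        rcases hor with h | h <;> subst h
        · exact le_max_left _ _
        · exact le_max_right _ _
      have h2 := Finset.single_le_sum (f := fun e' : Fin k × Fin k => max (p v e'.1) (p v e'.2))
          (fun e' _ => le_trans (hnn v e'.1) (le_max_left _ _)) he
      linarith
    · have h1 : p v j ≤ ∑ j ∈ Finset.univ \ C, p v j :=
        Finset.single_le_sum (fun j _ => hnn v j)
          (Finset.mem_sdiff.mpr ⟨Finset.mem_univ j, hj⟩)
      linarith
  -- per-edge bound
  have hmaxsum : ∀ e ∈ M, ∑ v : Fin n → Bool, max (p v e.1) (p v e.2)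
      ≤ (1/(k:ℝ)) * (1 + mmax (A e.1) (A e.2)) := by
    intro e he
    have h1 : ∀ v, p v e.1 = (1/(k:ℝ)) * qq (A e.1) (A e.2) v := by
      intro v; simp only [hpdef]; rw [hpt1 e he]
    have h2 : ∀ v, p v e.2 = (1/(k:ℝ)) * qq (A e.2) (A e.1) v := by
      intro v; simp only [hpdef]; rw [hpt2 e he]
    calc ∑ v : Fin n → Bool, max (p v e.1) (p v e.2)
        = (1/(k:ℝ)) * ∑ v : Fin n → Bool,
            max (qq (A e.1) (A e.2) v) (qq (A e.2) (A e.1) v) := by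
          rw [Finset.mul_sum]
          refine Finset.sum_congr rfl fun v _ => ?_
          rw [h1, h2, ← mul_max_of_nonneg _ _ (by positivity : (0:ℝ) ≤ 1/(k:ℝ))]
      _ ≤ (1/(k:ℝ)) * (1 + mmax (A e.1) (A e.2)) :=
          mul_le_mul_of_nonneg_left (qq_max_sum _ _ (hA e.1) (hA e.2)) (by positivity)
  -- sum over v of the bound
  have hbig : ∑ v : Fin n → Bool,
      Finset.univ.sup' Finset.univ_nonempty (fun j : Fin k => p v j)
      ≤ (∑ e ∈ M, (1/(k:ℝ)) * (1 + mmax (A e.1) (A e.2)))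
        + ((k:ℝ) - 2 * M.card) * (1/(k:ℝ)) := by
    calc ∑ v : Fin n → Bool,
        Finset.univ.sup' Finset.univ_nonempty (fun j : Fin k => p v j)
        ≤ ∑ v : Fin n → Bool, ((∑ e ∈ M, max (p v e.1) (p v e.2))
            + ∑ j ∈ Finset.univ \ C, p v j) :=
          Finset.sum_le_sum fun v _ => hsup v
      _ = (∑ e ∈ M, ∑ v : Fin n → Bool, max (p v e.1) (p v e.2))
            + ∑ j ∈ Finset.univ \ C, ∑ v : Fin n → Bool, p v j := by
          rw [Finset.sum_add_distrib, Finset.sum_comm, Finset.sum_comm (s := Finset.univ)]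
      _ ≤ (∑ e ∈ M, (1/(k:ℝ)) * (1 + mmax (A e.1) (A e.2)))
            + ((k:ℝ) - 2 * M.card) * (1/(k:ℝ)) := by
          apply add_le_add (Finset.sum_le_sum hmaxsum)
          apply le_of_eq
          rw [Finset.sum_congr rfl (fun j _ => hsum j), Finset.sum_const,
            Finset.card_sdiff_of_subset (Finset.subset_univ C), Finset.card_univ, Fintype.card_fin,
            hCcard, nsmul_eq_mul, Nat.cast_sub hC2k]
          push_cast
          ring
  -- final arithmetic
  set S1 : ℝ := ∑ e ∈ M, mmax (A e.1) (A e.2) with hS1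
  have hsum1 : ∑ e ∈ M, (1/(k:ℝ)) * (1 + mmax (A e.1) (A e.2))
      = (1/(k:ℝ)) * ((M.card : ℝ) + S1) := by
    rw [← Finset.mul_sum, Finset.sum_add_distrib, Finset.sum_const, nsmul_eq_mul,
      mul_one, hS1]
  have hT : (2 / (k : ℝ)) * ∑ e ∈ M,
        (1 / 2) * (1 - Finset.univ.sup' Finset.univ_nonempty
          (fun i : Fin n => |A e.1 i - A e.2 i|))
      = (1/(k:ℝ)) * ((M.card : ℝ) - S1) := by
    have hcongr : ∀ e ∈ M, (1/2 : ℝ) * (1 - Finset.univ.sup' Finset.univ_nonempty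
        (fun i : Fin n => |A e.1 i - A e.2 i|))
        = (1/2) * (1 - mmax (A e.1) (A e.2)) := fun e _ => rfl
    rw [Finset.sum_congr rfl hcongr, ← Finset.mul_sum, Finset.sum_sub_distrib,
      Finset.sum_const, nsmul_eq_mul, mul_one, ← hS1]
    ring
  have hkey : (1/(k:ℝ)) * ((M.card : ℝ) + S1) + ((k:ℝ) - 2 * M.card) * (1/(k:ℝ))
      = 1 - (1/(k:ℝ)) * ((M.card : ℝ) - S1) := by
    field_simp
    ring
  rw [hsum1] at hbig
  rw [hT]
  linarith
end

section
/- For a balanced binary task with class-attribute matrix rows (α_i), (β_i), the quantity Q(p) = 1 - Σ_v max(p(v,1), p(v,2)) satisfies Q(p) ≤ (1/2)(1 - |α_i - β_i|) for every p ∈ P(A) and every attribute index i ∈ [n]. -/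
open Finset

/-- for a balanced binary task with class-attribute rows `α, β`,
every `p ∈ P(A)` satisfies `Q(p) = 1 - ∑_v max(p(v,1),p(v,2))
≤ (1/2)(1 - |α_i - β_i|)` for every attribute `i`. -/
theorem stmt12 (n : ℕ) (α β : Fin n → ℝ)
    (p : (Fin n → Bool) → Fin 2 → ℝ)
    (hp0 : ∀ v j, 0 ≤ p v j)
    (hbal : ∀ j : Fin 2, ∑ v : Fin n → Bool, p v j = 1 / 2)
    (hCA : ∀ (j : Fin 2) (i : Fin n),
      ∑ v ∈ Finset.univ.filter (fun v : Fin n → Bool => v i = true), p v j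
        = (if j = 0 then α i else β i) / 2) :
    ∀ i : Fin n,
      1 - ∑ v : Fin n → Bool, max (p v 0) (p v 1)
        ≤ (1 / 2) * (1 - |α i - β i|) := by
  intro i
  set S := Finset.univ.filter (fun v : Fin n → Bool => v i = true) with hS
  have hcompl : ∀ j : Fin 2,
      ∑ v ∈ Sᶜ, p v j = 1 / 2 - (if j = 0 then α i else β i) / 2 := by
    intro j
    have h1 : (∑ v ∈ S, p v j) + ∑ v ∈ Sᶜ, p v j = 1 / 2 := by
      rw [Finset.sum_add_sum_compl]; exact hbal j
    have h2 := hCA j i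
    rw [← hS] at h2
    linarith
  have hA := hCA 0 i
  have hB := hCA 1 i
  rw [← hS] at hA hB
  norm_num at hA
  norm_num at hB
  have hA' := hcompl 0
  have hB' := hcompl 1
  norm_num at hA'
  norm_num at hB'
  have key1 : (∑ v ∈ S, p v 0) + ∑ v ∈ Sᶜ, p v 1
      ≤ ∑ v : Fin n → Bool, max (p v 0) (p v 1) := by
    rw [← Finset.sum_add_sum_compl S]
    gcongr with v _ v _
    · exact le_max_left _ _
    · exact le_max_right _ _
  have key2 : (∑ v ∈ S, p v 1) + ∑ v ∈ Sᶜ, p v 0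
      ≤ ∑ v : Fin n → Bool, max (p v 0) (p v 1) := by
    rw [← Finset.sum_add_sum_compl S]
    gcongr with v _ v _
    · exact le_max_right _ _
    · exact le_max_left _ _
  rcases abs_cases (α i - β i) with ⟨h, _⟩ | ⟨h, _⟩ <;> rw [h] <;> linarith
end

section
/- Let M be a matching of the complete graph on [k] and for each edge e = {j,j'} ∈ M let p^e be a PMF on {0,1}^n × {j,j'} with each class having mass 1/2, and for each unmatched class c let p^c be a PMF on {0,1}^n × {c}. Define p̃(v,j) = (2/k) p^e(v,j) if j belongs to edge e ∈ M, and p̃(v,j) = (1/k) p^j(v,j) if j is unmatched. Then p̃ is a balanced PMF on {0,1}^n × [k], and 1 - Σ_v max_j p̃(v,j) ≥ (2/k) Σ_{{j,j'}∈M} Σ_v min(p^e(v,j), p^e(v,j')). -/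
open Finset

/-!
In every column `v`, the edges of the matching are pairwise disjoint, so sending each edge to
its endpoint different from a most likely class `j₀` is injective and avoids `j₀`. Bounding the
minimum on an edge by the mass of that endpoint gives
`∑_{e ∈ M} min (p̃ v e.1) (p̃ v e.2) ≤ ∑_j p̃ v j - max_j p̃ v j`; summing over `v` and using
`p̃ v e.i = (2/k) pe e v i` on matched classes yields the bound.
-/

section Matching

variable {ι α : Type*} {M : Finset (ι × ι)}

def otherEnd [DecidableEq ι] (j₀ : ι) (e : ι × ι) : ι := if e.1 = j₀ then e.2 else e.1

lemma otherEnd_ne [DecidableEq ι] (hM1 : ∀ e ∈ M, e.1 ≠ e.2) {e : ι × ι} (he : e ∈ M)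
    (j₀ : ι) : otherEnd j₀ e ≠ j₀ := by
  unfold otherEnd
  split_ifs with h
  · exact fun h' => hM1 e he (h.trans h'.symm)
  · exact h

lemma otherEnd_injOn [DecidableEq ι]
    (hM2 : ∀ e ∈ M, ∀ e' ∈ M, e ≠ e' →
      e.1 ≠ e'.1 ∧ e.1 ≠ e'.2 ∧ e.2 ≠ e'.1 ∧ e.2 ≠ e'.2) (j₀ : ι) :
    Set.InjOn (otherEnd j₀) M := by
  intro e he e' he' heq
  by_contra hne
  obtain ⟨h11, h12, h21, h22⟩ := hM2 e he e' he' hne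
  unfold otherEnd at heq
  split_ifs at heq <;> contradiction

lemma min_le_otherEnd [LinearOrder α] [DecidableEq ι] (f : ι → α) (j₀ : ι) (e : ι × ι) :
    min (f e.1) (f e.2) ≤ f (otherEnd j₀ e) := by
  unfold otherEnd
  split_ifs
  exacts [min_le_right _ _, min_le_left _ _]

theorem sum_min_le_sum_erase [AddCommGroup α] [LinearOrder α] [IsOrderedAddMonoid α]
    [Fintype ι] [DecidableEq ι] (hM1 : ∀ e ∈ M, e.1 ≠ e.2)
    (hM2 : ∀ e ∈ M, ∀ e' ∈ M, e ≠ e' →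
      e.1 ≠ e'.1 ∧ e.1 ≠ e'.2 ∧ e.2 ≠ e'.1 ∧ e.2 ≠ e'.2)
    {f : ι → α} (hf : ∀ j, 0 ≤ f j) (j₀ : ι) :
    ∑ e ∈ M, min (f e.1) (f e.2) ≤ ∑ j ∈ univ.erase j₀, f j := by
  have hsub : M.image (otherEnd j₀) ⊆ univ.erase j₀ := by
    rintro _ hx
    obtain ⟨e, he, rfl⟩ := mem_image.mp hx
    exact mem_erase.mpr ⟨otherEnd_ne hM1 he j₀, mem_univ _⟩
  calc ∑ e ∈ M, min (f e.1) (f e.2)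
      ≤ ∑ e ∈ M, f (otherEnd j₀ e) := sum_le_sum fun e _ => min_le_otherEnd f j₀ e
    _ = ∑ j ∈ M.image (otherEnd j₀), f j := (sum_image (otherEnd_injOn hM2 j₀)).symm
    _ ≤ ∑ j ∈ univ.erase j₀, f j := sum_le_sum_of_subset_of_nonneg hsub fun j _ _ => hf j

theorem sum_min_le_sum_sub_sup' [AddCommGroup α] [LinearOrder α] [IsOrderedAddMonoid α]
    [Fintype ι] [Nonempty ι] (hM1 : ∀ e ∈ M, e.1 ≠ e.2)
    (hM2 : ∀ e ∈ M, ∀ e' ∈ M, e ≠ e' →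
      e.1 ≠ e'.1 ∧ e.1 ≠ e'.2 ∧ e.2 ≠ e'.1 ∧ e.2 ≠ e'.2)
    {f : ι → α} (hf : ∀ j, 0 ≤ f j) :
    ∑ e ∈ M, min (f e.1) (f e.2) ≤ ∑ j, f j - univ.sup' univ_nonempty f := by
  classical
  obtain ⟨j₀, -, hj₀⟩ := exists_mem_eq_sup' univ_nonempty f
  rw [hj₀, ← sum_erase_eq_sub (mem_univ j₀)]
  exact sum_min_le_sum_erase hM1 hM2 hf j₀

end Matching

/-- given a matching `M` on the `k` classes, per-edge balanced
PMFs `pe e` on `{0,1}^n × {e.1, e.2}` (two classes indexed by `Fin 2`, each of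
mass `1/2`) and per-unmatched-class PMFs `pc c`, the mixture
`p̃(v,j) = (2/k) pe(v,·)` on matched classes and `(1/k) pc(v)` on unmatched
classes is a balanced PMF on `{0,1}^n × [k]`, and its Bayes error is at least
`(2/k) ∑_{e∈M} ∑_v min(pe(v,e.1), pe(v,e.2))`. -/
theorem stmt19 (n k : ℕ) [NeZero k]
    (M : Finset (Fin k × Fin k))
    (hM1 : ∀ e ∈ M, e.1 ≠ e.2)
    (hM2 : ∀ e ∈ M, ∀ e' ∈ M, e ≠ e' →
      e.1 ≠ e'.1 ∧ e.1 ≠ e'.2 ∧ e.2 ≠ e'.1 ∧ e.2 ≠ e'.2)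
    (pe : Fin k × Fin k → (Fin n → Bool) → Fin 2 → ℝ)
    (hpe0 : ∀ e ∈ M, ∀ v c, 0 ≤ pe e v c)
    (hpe1 : ∀ e ∈ M, ∀ c : Fin 2, ∑ v : Fin n → Bool, pe e v c = 1 / 2)
    (pc : Fin k → (Fin n → Bool) → ℝ)
    (hpc0 : ∀ c : Fin k, (∀ e ∈ M, c ≠ e.1 ∧ c ≠ e.2) → ∀ v, 0 ≤ pc c v)
    (hpc1 : ∀ c : Fin k, (∀ e ∈ M, c ≠ e.1 ∧ c ≠ e.2) →
      ∑ v : Fin n → Bool, pc c v = 1)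
    (ptilde : (Fin n → Bool) → Fin k → ℝ)
    (hmatched : ∀ e ∈ M, ∀ v,
      ptilde v e.1 = (2 / (k : ℝ)) * pe e v 0 ∧
      ptilde v e.2 = (2 / (k : ℝ)) * pe e v 1)
    (hunmatched : ∀ c : Fin k, (∀ e ∈ M, c ≠ e.1 ∧ c ≠ e.2) →
      ∀ v, ptilde v c = (1 / (k : ℝ)) * pc c v) :
    (∀ v j, 0 ≤ ptilde v j) ∧
    (∀ j : Fin k, ∑ v : Fin n → Bool, ptilde v j = 1 / (k : ℝ)) ∧
    (2 / (k : ℝ)) * ∑ e ∈ M, ∑ v : Fin n → Bool, min (pe e v 0) (pe e v 1)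
      ≤ 1 - ∑ v : Fin n → Bool,
          (Finset.univ.sup' Finset.univ_nonempty (fun j : Fin k => ptilde v j)) := by
  have hk : (0 : ℝ) < k := Nat.cast_pos.mpr (NeZero.pos k)
  have hclass : ∀ j, ∃ (a : ℝ) (q : (Fin n → Bool) → ℝ), 0 ≤ a ∧ (∀ v, 0 ≤ q v) ∧
      a * ∑ v, q v = 1 / k ∧ ∀ v, ptilde v j = a * q v := by
    intro j
    by_cases h : ∃ e ∈ M, j = e.1 ∨ j = e.2
    · obtain ⟨e, he, rfl | rfl⟩ := h
      · refine ⟨2 / k, (pe e · 0), by positivity, (hpe0 e he · 0), ?_, (hmatched e he · |>.1)⟩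
        rw [hpe1 e he 0]; field_simp
      · refine ⟨2 / k, (pe e · 1), by positivity, (hpe0 e he · 1), ?_, (hmatched e he · |>.2)⟩
        rw [hpe1 e he 1]; field_simp
    · push Not at h
      exact ⟨1 / k, pc j, by positivity, hpc0 j h, by rw [hpc1 j h, mul_one], hunmatched j h⟩
  have hnonneg : ∀ v j, 0 ≤ ptilde v j := fun v j => by
    obtain ⟨a, q, ha, hq, -, hpt⟩ := hclass j
    exact hpt v ▸ mul_nonneg ha (hq v)
  have hbalanced : ∀ j, ∑ v, ptilde v j = 1 / (k : ℝ) := fun j => by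
    obtain ⟨a, q, -, -, hsum, hpt⟩ := hclass j
    simp_rw [hpt, ← mul_sum, hsum]
  refine ⟨hnonneg, hbalanced, ?_⟩
  have hmass : ∑ v, ∑ j, ptilde v j = 1 := by
    rw [sum_comm]; simp [hbalanced]
  calc (2 / (k : ℝ)) * ∑ e ∈ M, ∑ v, min (pe e v 0) (pe e v 1)
      = ∑ v, ∑ e ∈ M, min (ptilde v e.1) (ptilde v e.2) := by
        simp_rw [mul_sum, sum_comm (s := M)]
        refine sum_congr rfl fun v _ => sum_congr rfl fun e he => ?_
        rw [(hmatched e he v).1, (hmatched e he v).2, mul_min_of_nonneg _ _ (by positivity)]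
    _ ≤ ∑ v, (∑ j, ptilde v j - univ.sup' univ_nonempty (ptilde v)) :=
        sum_le_sum fun v _ => sum_min_le_sum_sub_sup' hM1 hM2 (hnonneg v)
    _ = _ := by rw [sum_sub_distrib, hmass]
end
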